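/- Let X be a Banach space and f : X → ℝ∪{+∞} with ∂f maximal monotone. If f is lower semicontinuous at a point x ∈ dom(cl conv f), then there is a sequence (x_n) ⊆ D(∂f) with x_n → x and f(x_n) → f(x) = (cl conv f)(x). -/

import Mathlib

/-!
Let `g` be the lsc convex hull of `f`. The graph of `∂g` is monotone and contains the graph
of `∂f` (where `f` has a subgradient, the corresponding affine minorant forces `g = f`), so by
maximality `∂g = ∂f`. In particular `∂g` is nonempty, and `g` lies above an affine function.

Ekeland's variational principle applied to `g + (n + 1)‖· - x‖ - p₀` gives a point `uₙ` at
which `g` plus a continuous convex function is minimal; separating the epigraph of `g` from an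
open convex set (Hahn–Banach) then produces a subgradient of `g` at `uₙ`. The Ekeland estimate
gives `uₙ → x` and `limsup g(uₙ) ≤ g(x)`, hence `g(uₙ) → g(x)` by lower semicontinuity of `g`.
As `f = g` on `D(∂f)`, lower semicontinuity of `f` at `x` yields `f x ≤ g x ≤ f x`.
-/

open scoped Topology

section Defs

variable {X : Type*} [AddCommGroup X] [Module ℝ X] [TopologicalSpace X]

/-- `p ∈ ∂f(x)`: `f x` is finite and `f y ≥ f x + ⟨y - x, p⟩` for all `y`. -/
def IsSubgrad (f : X → EReal) (x : X) (p : X →L[ℝ] ℝ) : Prop :=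
  f x ≠ ⊤ ∧ f x ≠ ⊥ ∧ ∀ y, f x + (p (y - x) : EReal) ≤ f y

/-- Graph of the convex subdifferential of `f`. -/
def graphSub (f : X → EReal) : Set (X × (X →L[ℝ] ℝ)) :=
  {q | IsSubgrad f q.1 q.2}

/-- Domain `D(∂f)` of the subdifferential. -/
def subdiffDom (f : X → EReal) : Set X := {x | ∃ p, IsSubgrad f x p}

/-- Range `R(∂f)` of the subdifferential. -/
def subdiffRan (f : X → EReal) : Set (X →L[ℝ] ℝ) := {p | ∃ x, IsSubgrad f x p}

/-- Monotone subset of `X × X*`. -/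
def MonotoneSet (S : Set (X × (X →L[ℝ] ℝ))) : Prop :=
  ∀ a ∈ S, ∀ b ∈ S, 0 ≤ a.2 (a.1 - b.1) - b.2 (a.1 - b.1)

/-- Maximal monotone subset of `X × X*` (maximal w.r.t. graph inclusion). -/
def MaxMonotoneSet (S : Set (X × (X →L[ℝ] ℝ))) : Prop :=
  MonotoneSet S ∧ ∀ T, MonotoneSet T → S ⊆ T → T = S

/-- Proper function: never `−∞` and not identically `+∞`. -/
def ProperE {Y : Type*} (f : Y → EReal) : Prop :=
  (∃ x, f x ≠ ⊤) ∧ ∀ x, f x ≠ ⊥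

/-- Convexity of an extended-real-valued function via its epigraph. -/
def ConvexEpi (f : X → EReal) : Prop :=
  Convex ℝ {q : X × ℝ | f q.1 ≤ (q.2 : EReal)}

/-- The lsc convex hull: the greatest lsc convex function majorized by `f`. -/
noncomputable def lscConvHull (f : X → EReal) : X → EReal := fun x =>
  sSup {v | ∃ g : X → EReal, ConvexEpi g ∧ LowerSemicontinuous g ∧ g ≤ f ∧ v = g x}

/-- Convex conjugate w.r.t. the dual system `(X, X*)`. -/
noncomputable def conjE (f : X → EReal) (p : X →L[ℝ] ℝ) : EReal :=
  ⨆ x, ((p x : EReal) - f x)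

/-- Biconjugate `f**`. -/
noncomputable def biconjE (f : X → EReal) (x : X) : EReal :=
  ⨆ p : X →L[ℝ] ℝ, ((p x : EReal) - conjE f p)

/-- Fitzpatrick function of `∂f`. -/
noncomputable def fitzSub (f : X → EReal) (x : X) (p : X →L[ℝ] ℝ) : EReal :=
  ⨆ a, ⨆ s, ⨆ _ : IsSubgrad f a s, ((s (x - a) + p a : ℝ) : EReal)

/-- Upper envelope `f^∪(x) = sup{⟨x−a, a*⟩ + f(a) : (a,a*) ∈ Graph ∂f}`. -/
noncomputable def upperEnv (f : X → EReal) (x : X) : EReal :=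
  ⨆ a, ⨆ s, ⨆ _ : IsSubgrad f a s, ((s (x - a) : EReal) + f a)

end Defs

open Filter Set Topology

section Semicontinuity

variable {α β γ : Type*} [TopologicalSpace α] [LinearOrder γ] [TopologicalSpace γ]
  [OrderTopology γ] {f : α → γ} {x : α} {u : β → α} {l : Filter β}

theorem LowerSemicontinuousAt.le_of_tendsto [DenselyOrdered γ] [l.NeBot]
    (hf : LowerSemicontinuousAt f x) (hu : Tendsto u l (𝓝 x)) {c : γ}
    (hfu : Tendsto (fun n => f (u n)) l (𝓝 c)) : f x ≤ c :=
  le_of_forall_lt_imp_le_of_dense fun a ha =>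
    ge_of_tendsto hfu ((hu.eventually (hf a ha)).mono fun _ h => h.le)

theorem LowerSemicontinuousAt.tendsto_of_le (hf : LowerSemicontinuousAt f x)
    (hu : Tendsto u l (𝓝 x)) {b : β → γ} (hb : Tendsto b l (𝓝 (f x)))
    (hle : ∀ n, f (u n) ≤ b n) : Tendsto (fun n => f (u n)) l (𝓝 (f x)) :=
  tendsto_order.2 ⟨fun a ha => hu.eventually (hf a ha),
    fun _ ha => (hb.eventually (gt_mem_nhds ha)).mono fun n hn => (hle n).trans_lt hn⟩

theorem LowerSemicontinuous.add_coe {f : α → EReal} (hf : LowerSemicontinuous f)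
    {φ : α → ℝ} (hφ : Continuous φ) : LowerSemicontinuous fun y => f y + (φ y : EReal) :=
  hf.add' (continuous_coe_real_ereal.comp hφ).lowerSemicontinuous fun _ =>
    EReal.continuousAt_add (Or.inr (EReal.coe_ne_bot _)) (Or.inr (EReal.coe_ne_top _))

end Semicontinuity

section Ekeland

variable {α X : Type*}

theorem EReal.exists_mem_forall_le_add {s : Set α} (hs : s.Nonempty) {φ : α → EReal}
    {m : ℝ} (hm : ∀ y ∈ s, (m : EReal) ≤ φ y) {δ : ℝ} (hδ : 0 < δ) :
    ∃ y ∈ s, ∀ y' ∈ s, φ y ≤ φ y' + δ := by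
  set v := ⨅ y ∈ s, φ y
  by_cases hv : v = ⊤
  · obtain ⟨y, hy⟩ := hs
    refine ⟨y, hy, fun y' hy' => ?_⟩
    have : φ y' = ⊤ := top_le_iff.1 (hv ▸ iInf₂_le y' hy')
    simp [this]
  · have hvm : (m : EReal) ≤ v := le_iInf₂ hm
    have hlt : v < v + δ := by
      rw [← EReal.coe_toReal hv (ne_bot_of_le_ne_bot (EReal.coe_ne_bot m) hvm)]
      exact_mod_cast lt_add_of_pos_right _ hδ
    obtain ⟨y, hyv⟩ := iInf_lt_iff.1 hlt
    obtain ⟨hy, hyv⟩ := iInf_lt_iff.1 hyv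
    exact ⟨y, hy, fun y' hy' => hyv.le.trans (add_le_add_left (iInf₂_le y' hy') _)⟩

variable [MetricSpace X] {ψ : X → EReal}

def ekelandSet (ψ : X → EReal) (w : X) : Set X := {y | ψ y + dist y w ≤ ψ w}

theorem self_mem_ekelandSet (w : X) : w ∈ ekelandSet ψ w := by
  simp [ekelandSet]

theorem le_of_mem_ekelandSet {w y : X} (h : y ∈ ekelandSet ψ w) : ψ y ≤ ψ w :=
  le_trans (le_add_of_nonneg_right (EReal.coe_nonneg.2 dist_nonneg)) h

theorem ekelandSet_subset {w w' : X} (h : w' ∈ ekelandSet ψ w) :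
    ekelandSet ψ w' ⊆ ekelandSet ψ w := fun y hy =>
  calc ψ y + dist y w ≤ ψ y + (dist y w' + dist w' w : ℝ) := by
        gcongr; exact_mod_cast dist_triangle y w' w
    _ = ψ y + dist y w' + dist w' w := by rw [EReal.coe_add, add_assoc]
    _ ≤ ψ w' + dist w' w := by gcongr; exact hy
    _ ≤ ψ w := h

theorem LowerSemicontinuous.isClosed_ekelandSet (hψ : LowerSemicontinuous ψ) (w : X) :
    IsClosed (ekelandSet ψ w) :=
  (hψ.add_coe (continuous_id.dist continuous_const)).isClosed_preimage (ψ w)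

theorem dist_le_of_mem_ekelandSet {w y : X} {δ : ℝ} (hw : ψ w ≠ ⊤) (hy₀ : ψ y ≠ ⊥)
    (hmin : ψ w ≤ ψ y + δ) (hy : y ∈ ekelandSet ψ w) : dist y w ≤ δ := by
  lift ψ y to ℝ using ⟨(le_of_mem_ekelandSet hy).trans_lt hw.lt_top |>.ne, hy₀⟩ with r hr
  have := hy.trans hmin
  rw [← hr] at this
  exact_mod_cast (EReal.addLECancellable_coe r).add_le_add_iff_left.1 this

theorem LowerSemicontinuous.exists_le_forall_le_add_dist [CompleteSpace X]
    (hψ : LowerSemicontinuous ψ) {m : ℝ} (hm : ∀ y, (m : EReal) ≤ ψ y) {x : X}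
    (hx : ψ x ≠ ⊤) :
    ∃ z, ψ z ≤ ψ x ∧ ∀ y, ψ z ≤ ψ y + dist y z := by
  have hψ₀ : ∀ y, ψ y ≠ ⊥ := fun y => ne_bot_of_le_ne_bot (EReal.coe_ne_bot m) (hm y)
  choose F hF hFmin using fun (w : X) (k : ℕ) =>
    EReal.exists_mem_forall_le_add ⟨w, self_mem_ekelandSet w⟩ (fun y _ => hm y)
      (Nat.one_div_pos_of_nat (n := k))
  -- `z (k + 1)` is a `1 / (k + 1)`-minimizer of `ψ` on `ekelandSet ψ (z k)`.
  let z : ℕ → X := fun k => Nat.rec x (fun k w => F w k) k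
  have hanti : Antitone fun k => ekelandSet ψ (z k) :=
    antitone_nat_of_succ_le fun k => ekelandSet_subset (hF (z k) k)
  have hmem : ∀ k j, k ≤ j → z j ∈ ekelandSet ψ (z k) :=
    fun k j hkj => hanti hkj (self_mem_ekelandSet _)
  have hsmall :
      ∀ k, ∀ y ∈ ekelandSet ψ (z (k + 1)), dist y (z (k + 1)) ≤ 1 / ((k : ℝ) + 1) :=
    fun k y hy => dist_le_of_mem_ekelandSet
      (ne_top_of_le_ne_top hx (le_of_mem_ekelandSet (hmem 0 (k + 1) (Nat.zero_le _))))
      (hψ₀ y) (hFmin (z k) k y (hanti k.le_succ hy)) hy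
  have hδ : Tendsto (fun k : ℕ => 1 / ((k : ℝ) + 1)) atTop (𝓝 0) :=
    tendsto_one_div_add_atTop_nhds_zero_nat
  have hcauchy : CauchySeq fun k => z (k + 1) := by
    refine cauchySeq_of_le_tendsto_0 (fun k => 2 * (1 / ((k : ℝ) + 1))) (fun n l k hn hl => ?_)
      (by simpa using hδ.const_mul 2)
    calc dist (z (n + 1)) (z (l + 1))
        ≤ dist (z (n + 1)) (z (k + 1)) + dist (z (l + 1)) (z (k + 1)) :=
          dist_triangle_right _ _ _
      _ ≤ 2 * (1 / ((k : ℝ) + 1)) := by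
        linarith [hsmall k _ (hmem (k + 1) (n + 1) (by omega)),
          hsmall k _ (hmem (k + 1) (l + 1) (by omega))]
  obtain ⟨z', hz'⟩ := cauchySeq_tendsto_of_complete hcauchy
  have hz'mem : ∀ k, z' ∈ ekelandSet ψ (z k) := fun k =>
    (hψ.isClosed_ekelandSet _).mem_of_tendsto hz'
      (eventually_atTop.2 ⟨k, fun j hj => hmem k (j + 1) (by omega)⟩)
  refine ⟨z', le_of_mem_ekelandSet (hz'mem 0), fun y => ?_⟩
  by_cases hy : y ∈ ekelandSet ψ z'
  · have hzy : Tendsto (fun k => z (k + 1)) atTop (𝓝 y) :=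
      tendsto_iff_dist_tendsto_zero.2 <| squeeze_zero (fun _ => dist_nonneg)
        (fun k => by rw [dist_comm]; exact hsmall k y (ekelandSet_subset (hz'mem (k + 1)) hy))
        hδ
    rw [tendsto_nhds_unique hzy hz']
    simp
  · exact (not_le.1 hy).le

end Ekeland

section Hull

variable {X : Type*} [AddCommGroup X] [Module ℝ X] {f : X → EReal}

theorem convexEpi_coe {φ : X → ℝ} (hφ : ConvexOn ℝ univ φ) :
    ConvexEpi fun y => (φ y : EReal) := by
  simpa [ConvexEpi] using hφ.convex_epigraph

theorem convexOn_const_add_sub (c : ℝ) (p : X →ₗ[ℝ] ℝ) (x₀ : X) :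
    ConvexOn ℝ univ fun y => c + p (y - x₀) := by
  refine ⟨convex_univ, fun y _ y' _ a b _ _ hab => le_of_eq ?_⟩
  simp only [map_sub, map_add, map_smul, smul_eq_mul]
  linear_combination (p x₀ - c) * hab

variable [TopologicalSpace X]

theorem lscConvHull_le (f : X → EReal) (y : X) : lscConvHull f y ≤ f y :=
  sSup_le (α := EReal) fun _ ⟨_, _, _, hgf, hv⟩ => hv ▸ hgf y

theorem le_lscConvHull {g : X → EReal} (hgc : ConvexEpi g) (hgl : LowerSemicontinuous g)
    (hgf : g ≤ f) (y : X) : g y ≤ lscConvHull f y :=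
  le_sSup ⟨g, hgc, hgl, hgf, rfl⟩

theorem lowerSemicontinuous_lscConvHull (f : X → EReal) :
    LowerSemicontinuous (lscConvHull f) := by
  intro x t ht
  obtain ⟨_, ⟨g, hgc, hgl, hgf, rfl⟩, htg⟩ := lt_sSup_iff.1 ht
  exact (hgl x t htg).mono fun y hy => hy.trans_le (le_lscConvHull hgc hgl hgf y)

theorem convexEpi_lscConvHull (f : X → EReal) : ConvexEpi (lscConvHull f) := by
  intro q hq q' hq' a b ha hb hab
  refine sSup_le (α := EReal) ?_
  rintro _ ⟨g, hgc, hgl, hgf, rfl⟩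
  exact hgc ((le_lscConvHull hgc hgl hgf _).trans hq) ((le_lscConvHull hgc hgl hgf _).trans hq')
    ha hb hab

theorem monotoneSet_graphSub (f : X → EReal) : MonotoneSet (graphSub f) := by
  rintro ⟨a, s⟩ ⟨ha, ha₀, hsa⟩ ⟨b, t⟩ ⟨hb, hb₀, htb⟩
  lift f a to ℝ using ⟨ha, ha₀⟩ with ra hra
  lift f b to ℝ using ⟨hb, hb₀⟩ with rb hrb
  have h₁ := hsa b
  have h₂ := htb a
  rw [← hrb] at h₁
  rw [← hra] at h₂
  have h₁ : ra + s (b - a) ≤ rb := by exact_mod_cast h₁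
  have h₂ : rb + t (a - b) ≤ ra := by exact_mod_cast h₂
  have hs : s (b - a) = -s (a - b) := by rw [← map_neg, neg_sub]
  linarith

theorem MaxMonotoneSet.nonempty {S : Set (X × (X →L[ℝ] ℝ))} (hS : MaxMonotoneSet S) :
    S.Nonempty := by
  refine nonempty_iff_ne_empty.2 fun hempty => ?_
  have hmono : MonotoneSet ({(0, 0)} : Set (X × (X →L[ℝ] ℝ))) := by
    rintro _ rfl _ rfl
    simp
  have := hS.2 _ hmono (hempty ▸ empty_subset _)
  exact (hempty ▸ this ▸ mem_singleton (0, 0) : (0, 0) ∈ (∅ : Set (X × (X →L[ℝ] ℝ))))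

variable {x₀ : X} {p : X →L[ℝ] ℝ}

theorem IsSubgrad.coe_toReal_add_le (h : IsSubgrad f x₀ p) (y : X) :
    (((f x₀).toReal + p (y - x₀) : ℝ) : EReal) ≤ f y := by
  simpa only [EReal.coe_add, EReal.coe_toReal h.1 h.2.1] using h.2.2 y

theorem IsSubgrad.coe_toReal_add_le_lscConvHull [IsTopologicalAddGroup X] (h : IsSubgrad f x₀ p)
    (y : X) :
    (((f x₀).toReal + p (y - x₀) : ℝ) : EReal) ≤ lscConvHull f y :=
  le_lscConvHull (convexEpi_coe (convexOn_const_add_sub _ p.toLinearMap x₀))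
    (continuous_coe_real_ereal.comp (by fun_prop)).lowerSemicontinuous h.coe_toReal_add_le y

theorem IsSubgrad.lscConvHull_eq [IsTopologicalAddGroup X] (h : IsSubgrad f x₀ p) :
    lscConvHull f x₀ = f x₀ :=
  le_antisymm (lscConvHull_le f x₀) <| by
    simpa [EReal.coe_toReal h.1 h.2.1] using h.coe_toReal_add_le_lscConvHull x₀

theorem IsSubgrad.lscConvHull [IsTopologicalAddGroup X] (h : IsSubgrad f x₀ p) :
    IsSubgrad (lscConvHull f) x₀ p := by
  refine ⟨h.lscConvHull_eq ▸ h.1, h.lscConvHull_eq ▸ h.2.1, fun y => ?_⟩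
  rw [h.lscConvHull_eq, ← EReal.coe_toReal h.1 h.2.1, ← EReal.coe_add]
  exact h.coe_toReal_add_le_lscConvHull y

theorem MaxMonotoneSet.graphSub_lscConvHull_eq [IsTopologicalAddGroup X]
    (hmax : MaxMonotoneSet (graphSub f)) : graphSub (lscConvHull f) = graphSub f :=
  hmax.2 _ (monotoneSet_graphSub _) fun _ h => IsSubgrad.lscConvHull h

end Hull

section Separation

variable {X : Type*} [AddCommGroup X] [Module ℝ X] [TopologicalSpace X] {g : X → EReal} {z : X}

theorem isSubgrad_of_separates {r : ℝ} (L : (X × ℝ) →L[ℝ] ℝ) (u : ℝ) (hz : g z = r)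
    (hbelow : ∀ t < r, L (z, t) < u) (habove : ∀ y (t : ℝ), g y ≤ t → u ≤ L (y, t)) :
    IsSubgrad g z (-(L (0, 1))⁻¹ • L.comp (ContinuousLinearMap.inl ℝ X ℝ)) := by
  set c := L (0, 1)
  have hL : ∀ y t, L (y, t) = L (y, 0) + t * c := fun y t => by
    rw [← smul_eq_mul, ← map_smul, ← map_add, Prod.smul_mk, smul_zero, smul_eq_mul, mul_one,
      Prod.mk_add_mk, add_zero, zero_add]
  have hlim : Tendsto (fun t => L (z, t)) (𝓝[<] r) (𝓝 (L (z, r))) :=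
    ((L.continuous.comp (Continuous.prodMk_right z)).tendsto r).mono_left nhdsWithin_le_nhds
  have hzu : L (z, r) ≤ u :=
    le_of_tendsto hlim (eventually_nhdsWithin_of_forall fun t ht => (hbelow t ht).le)
  have hc : 0 < c := by
    have h₁ := hbelow (r - 1) (by linarith)
    have h₂ := habove z r hz.le
    rw [hL] at h₁ h₂
    linarith
  refine ⟨hz ▸ EReal.coe_ne_top r, hz ▸ EReal.coe_ne_bot r, fun y => ?_⟩
  refine EReal.le_of_forall_lt_iff_le.1 fun s hs => ?_
  have hys := habove y s hs.le
  rw [hL] at hys hzu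
  have hrs : r - s ≤ c⁻¹ * (L (y, 0) - L (z, 0)) := by
    rw [inv_mul_eq_div, le_div_iff₀ hc]
    linarith
  rw [hz, ← EReal.coe_add, EReal.coe_le_coe_iff]
  simp only [smul_apply, ContinuousLinearMap.comp_apply,
    ContinuousLinearMap.inl_apply, map_sub, smul_eq_mul]
  linarith

variable [IsTopologicalAddGroup X] [ContinuousSMul ℝ X]

theorem ConvexEpi.exists_isSubgrad_of_forall_add_le (hg : ConvexEpi g) {h : X → ℝ}
    (hh : ConvexOn ℝ univ h) (hhc : Continuous h) (hz : g z ≠ ⊤) (hz₀ : g z ≠ ⊥)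
    (hmin : ∀ y, g z + h z ≤ g y + h y) : ∃ p, IsSubgrad g z p := by
  obtain ⟨r, hr⟩ : ∃ r : ℝ, g z = r := ⟨_, (EReal.coe_toReal hz hz₀).symm⟩
  have hconv : Convex ℝ {q : X × ℝ | q.2 + h q.1 < r + h z} := by
    simpa using (((LinearMap.snd ℝ X ℝ).convexOn convex_univ).add
      (hh.comp_linearMap (LinearMap.fst ℝ X ℝ))).convex_lt (r + h z)
  have hopen : IsOpen {q : X × ℝ | q.2 + h q.1 < r + h z} :=
    isOpen_lt (by fun_prop) continuous_const
  have hdisj : Disjoint {q : X × ℝ | q.2 + h q.1 < r + h z} {q | g q.1 ≤ q.2} := by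
    refine disjoint_left.2 fun ⟨y, t⟩ hlt hle => ?_
    have := (hmin y).trans (add_le_add_left (show g y ≤ t from hle) _)
    rw [hr, ← EReal.coe_add, ← EReal.coe_add, EReal.coe_le_coe_iff] at this
    exact (lt_irrefl _) (hlt.trans_le this)
  obtain ⟨L, u, hbelow, habove⟩ := geometric_hahn_banach_open hconv hopen hg hdisj
  exact ⟨_, isSubgrad_of_separates L u hr (fun t ht => hbelow _ (by simpa using ht))
    fun y t hyt => habove _ hyt⟩

end Separation

section Density

variable {X : Type*} [NormedAddCommGroup X] [NormedSpace ℝ X] [CompleteSpace X] {g : X → EReal}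
  {x₀ x : X} {p₀ : X →L[ℝ] ℝ}

theorem exists_mem_subdiffDom_add_le (hgc : ConvexEpi g) (hgl : LowerSemicontinuous g)
    (h₀ : IsSubgrad g x₀ p₀) (hx : g x ≠ ⊤) {k : ℝ} (hk : 0 ≤ k) :
    ∃ u ∈ subdiffDom g, g u + ((k * dist u x + p₀ (x - u) : ℝ) : EReal) ≤ g x := by
  set φ : X → ℝ := fun y => k * dist y x + p₀ (x - y)
  have hφc : ConvexOn ℝ univ φ := ((convexOn_dist x convex_univ).smul hk).add
    ((convexOn_const_add_sub 0 (-p₀.toLinearMap) x).congr fun y _ => by simp)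
  have hφ : Continuous φ := by fun_prop
  have hbdd : ∀ y, (((g x₀).toReal + p₀ (x - x₀) : ℝ) : EReal) ≤ g y + φ y := fun y =>
    calc (((g x₀).toReal + p₀ (x - x₀) : ℝ) : EReal)
        ≤ (((g x₀).toReal + p₀ (y - x₀) + φ y : ℝ) : EReal) := by
          have := mul_nonneg hk (dist_nonneg (x := y) (y := x))
          simp only [φ, map_sub, EReal.coe_le_coe_iff]
          linarith
      _ ≤ g y + φ y := by rw [EReal.coe_add]; exact add_le_add_left (h₀.coe_toReal_add_le y) _
  have hφx : g x + φ x = g x := by simp [φ]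
  obtain ⟨z, hzx, hzmin⟩ :=
    (hgl.add_coe hφ).exists_le_forall_le_add_dist hbdd (x := x) (by rwa [hφx])
  have hz : g z ≠ ⊤ := fun h => hx (by simpa [h, hφx] using hzx)
  have hz₀ : g z ≠ ⊥ := ne_bot_of_le_ne_bot (EReal.coe_ne_bot _) (h₀.coe_toReal_add_le z)
  obtain ⟨p, hp⟩ :=
    hgc.exists_isSubgrad_of_forall_add_le (hφc.add (convexOn_dist z convex_univ))
      (hφ.add (continuous_id.dist continuous_const)) hz hz₀
    fun y => by simpa [EReal.coe_add, add_assoc] using hzmin y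
  exact ⟨z, ⟨p, hp⟩, hφx ▸ hzx⟩

theorem exists_seq_mem_subdiffDom_tendsto (hgc : ConvexEpi g) (hgl : LowerSemicontinuous g)
    (h₀ : IsSubgrad g x₀ p₀) (hx : g x ≠ ⊤) :
    ∃ u : ℕ → X, (∀ n, u n ∈ subdiffDom g) ∧ Tendsto u atTop (𝓝 x) ∧
      Tendsto (fun n => g (u n)) atTop (𝓝 (g x)) := by
  obtain ⟨r, hr⟩ : ∃ r : ℝ, g x = r :=
    ⟨_, (EReal.coe_toReal hx
      (ne_bot_of_le_ne_bot (EReal.coe_ne_bot _) (h₀.coe_toReal_add_le x))).symm⟩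
  choose u hu hle using fun n : ℕ =>
    exists_mem_subdiffDom_add_le hgc hgl h₀ hx (k := n + 1) n.cast_add_one_pos.le
  have hreal : ∀ n, ∃ s : ℝ, g (u n) = s ∧ (g x₀).toReal + p₀ (u n - x₀) ≤ s ∧
      s + ((n + 1) * dist (u n) x + p₀ (x - u n)) ≤ r := fun n => by
    have hminor := h₀.coe_toReal_add_le (u n)
    obtain ⟨s, hs⟩ : ∃ s : ℝ, g (u n) = s :=
      ⟨_, (EReal.coe_toReal (hu n).choose_spec.1
        (ne_bot_of_le_ne_bot (EReal.coe_ne_bot _) hminor)).symm⟩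
    have hest := hle n
    rw [hs, hr, ← EReal.coe_add, EReal.coe_le_coe_iff] at hest
    exact ⟨s, hs, by exact_mod_cast hs ▸ hminor, hest⟩
  choose s hs hminor hest using hreal
  set C := r - (g x₀).toReal - p₀ (x - x₀)
  have hdist : ∀ n, dist (u n) x ≤ C * (1 / ((n : ℝ) + 1)) := fun n => by
    rw [mul_one_div, le_div_iff₀' n.cast_add_one_pos]
    have := hminor n
    have := hest n
    simp only [C, map_sub] at *
    linarith
  have hux : Tendsto u atTop (𝓝 x) :=
    tendsto_iff_dist_tendsto_zero.2 <| squeeze_zero (fun _ => dist_nonneg) hdist <| by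
      simpa using tendsto_one_div_add_atTop_nhds_zero_nat.const_mul C
  refine ⟨u, hu, hux, LowerSemicontinuousAt.tendsto_of_le (hgl x) hux
    (b := fun n => ((r + p₀ (u n - x) : ℝ) : EReal)) ?_ fun n => ?_⟩
  · rw [hr, EReal.tendsto_coe]
    simpa [add_sub_assoc] using
      ((p₀.continuous.tendsto x).comp hux).const_add r |>.sub_const (p₀ x)
  · rw [hs n, EReal.coe_le_coe_iff]
    have := hest n
    have := mul_nonneg (n.cast_add_one_pos (α := ℝ)).le (dist_nonneg (x := u n) (y := x))
    simp only [map_sub] at *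
    linarith

end Density

theorem lsc_point_approx_by_subdiffDom_general {X : Type*} [NormedAddCommGroup X] [NormedSpace ℝ X] [CompleteSpace X]
    (f : X → EReal)
    (hmax : MaxMonotoneSet (graphSub f))
    (x : X) (hx : lscConvHull f x ≠ ⊤) (hlsc : LowerSemicontinuousAt f x) :
    ∃ u : ℕ → X, (∀ n, u n ∈ subdiffDom f) ∧
      Filter.Tendsto u Filter.atTop (𝓝 x) ∧
      Filter.Tendsto (fun n => f (u n)) Filter.atTop (𝓝 (f x)) ∧
      f x = lscConvHull f x := by
  obtain ⟨⟨x₀, p₀⟩, h₀⟩ := hmax.nonempty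
  obtain ⟨u, hu, hux, hgu⟩ := exists_seq_mem_subdiffDom_tendsto (convexEpi_lscConvHull f)
    (lowerSemicontinuous_lscConvHull f) (IsSubgrad.lscConvHull h₀) hx
  have hgraph := hmax.graphSub_lscConvHull_eq
  have hsub : ∀ n, u n ∈ subdiffDom f := fun n =>
    let ⟨p, hp⟩ := hu n
    ⟨p, show (u n, p) ∈ graphSub f from hgraph ▸ hp⟩
  have hfu : Tendsto (fun n => f (u n)) atTop (𝓝 (lscConvHull f x)) :=
    hgu.congr fun n => IsSubgrad.lscConvHull_eq (hsub n).choose_spec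
  have hfx : f x = lscConvHull f x := le_antisymm (hlsc.le_of_tendsto hux hfu) (lscConvHull_le f x)
  exact ⟨u, hsub, hux, hfx ▸ hfu, hfx⟩

theorem lsc_point_approx_by_subdiffDom {X : Type*} [NormedAddCommGroup X] [NormedSpace ℝ X] [CompleteSpace X]
    (f : X → EReal) (hbot : ∀ x, f x ≠ ⊥)
    (hmax : MaxMonotoneSet (graphSub f))
    (x : X) (hx : lscConvHull f x ≠ ⊤) (hlsc : LowerSemicontinuousAt f x) :
    ∃ u : ℕ → X, (∀ n, u n ∈ subdiffDom f) ∧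
      Filter.Tendsto u Filter.atTop (𝓝 x) ∧
      Filter.Tendsto (fun n => f (u n)) Filter.atTop (𝓝 (f x)) ∧
      f x = lscConvHull f x :=
  lsc_point_approx_by_subdiffDom_general f hmax x hx hlsc
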